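/- arXiv:math/0311029 — 2 statements merged into one kernel-verified Lean document; each statement's English description precedes it below -/
import Mathlib

section
/- Let m ≥ 1 be an integer and let x, τ ∈ ℂ with x ≠ 1/2. Set ρ = 1/2 + iτ and v = (x − 1/2)², and assume x ≠ ρ and x ≠ 1 − ρ (equivalently, τ² + v ≠ 0). Then (τ²+v)^{−m} = Σ_{n=1}^{m} C(2m−n−1, m−1) · (2x−1)^{n−2m} · ((x−ρ)^{−n} + (x−1+ρ)^{−n}), where C(·,·) denotes the binomial coefficient. -/
open Complex Finset

noncomputable def Sb (a b : ℂ) (p q : ℕ) : ℂ :=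
  ∑ k ∈ Finset.range q, ((p + k).choose k : ℂ) * a ^ k * b ^ (p + 1) * (a + b) ^ (q - 1 - k)

lemma Sb_rec (a b : ℂ) (p q : ℕ) :
    Sb a b (p + 1) (q + 1) = a * Sb a b (p + 1) q + b * Sb a b p (q + 1) := by
  simp only [Sb, Finset.mul_sum, Finset.sum_range_succ' _ q]
  have h1 : ∀ k ∈ Finset.range q,
      ((p + 1 + (k + 1)).choose (k + 1) : ℂ) * a ^ (k + 1) * b ^ (p + 1 + 1) *
          (a + b) ^ (q + 1 - 1 - (k + 1)) =
        a * (((p + 1 + k).choose k : ℂ) * a ^ k * b ^ (p + 1 + 1) * (a + b) ^ (q - 1 - k)) +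
          b * (((p + (k + 1)).choose (k + 1) : ℂ) * a ^ (k + 1) * b ^ (p + 1) *
            (a + b) ^ (q + 1 - 1 - (k + 1))) := by
    intro k hk
    have e1 : p + 1 + (k + 1) = (p + 1 + k) + 1 := by ring
    have e2 : p + (k + 1) = p + 1 + k := by ring
    have e3 : q + 1 - 1 - (k + 1) = q - 1 - k := by omega
    rw [e1, e2, e3, Nat.choose_succ_succ (p + 1 + k) k]
    push_cast
    ring
  rw [Finset.sum_congr rfl h1, Finset.sum_add_distrib, mul_add, Finset.mul_sum]
  simp only [Nat.choose_zero_right, Nat.cast_one, pow_zero, Nat.sub_zero, one_mul, mul_one]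
  ring

lemma geomaux (a b : ℂ) (q : ℕ) :
    (∑ k ∈ Finset.range (q + 1), a ^ k * b * (a + b) ^ (q - k)) + a ^ (q + 1) = (a + b) ^ (q + 1) := by
  induction q with
  | zero => simp; ring
  | succ q ih =>
    rw [Finset.sum_range_succ]
    have h : ∀ k ∈ Finset.range (q + 1),
        a ^ k * b * (a + b) ^ (q + 1 - k) = (a + b) * (a ^ k * b * (a + b) ^ (q - k)) := by
      intro k hk
      rw [show q + 1 - k = (q - k) + 1 from by simp at hk; omega, pow_succ]
      ring
    rw [Finset.sum_congr rfl h, ← Finset.mul_sum, pow_succ (a + b) (q + 1), pow_succ a (q + 1)]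
    simp only [Nat.sub_self, pow_zero]
    linear_combination (a + b) * ih

lemma Sb_base (a b : ℂ) (q : ℕ) :
    Sb a b 0 (q + 1) + Sb b a q 1 = (a + b) ^ (q + 1) := by
  have h1 : Sb b a q 1 = a ^ (q + 1) := by
    simp [Sb]
  have h2 : Sb a b 0 (q + 1) = ∑ k ∈ Finset.range (q + 1), a ^ k * b * (a + b) ^ (q - k) := by
    unfold Sb
    refine Finset.sum_congr rfl fun k hk => ?_
    simp [Nat.choose_self]
  rw [h1, h2]
  exact geomaux a b q

lemma Sb_main (a b : ℂ) : ∀ p q : ℕ, Sb a b p (q + 1) + Sb b a q (p + 1) = (a + b) ^ (p + q + 1) := by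
  intro p
  induction p with
  | zero =>
    intro q
    rw [show 0 + q + 1 = q + 1 from by omega]
    exact Sb_base a b q
  | succ p ih =>
    intro q
    induction q with
    | zero =>
      have h := Sb_base b a (p + 1)
      rw [add_comm b a] at h
      rw [show p + 1 + 0 + 1 = p + 1 + 1 from rfl]
      linear_combination h
    | succ q ihq =>
      rw [Sb_rec a b p (q + 1), Sb_rec b a q (p + 1)]
      have h1 := ihq
      have h2 := ih (q + 1)
      rw [show p + 1 + q + 1 = p + q + 2 from by omega] at h1
      rw [show p + (q + 1) + 1 = p + q + 2 from by omega] at h2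
      rw [show p + 1 + (q + 1) + 1 = (p + q + 2) + 1 from by omega, pow_succ]
      linear_combination a * h1 + b * h2

lemma key (a b : ℂ) (r : ℕ) :
    (a + b) ^ (2 * (r + 1)) =
      ∑ n ∈ Finset.Icc 1 (r + 1),
        ((2 * (r + 1) - n - 1).choose r : ℂ) * (a + b) ^ n *
          (a ^ (r + 1 - n) * b ^ (r + 1) + a ^ (r + 1) * b ^ (r + 1 - n)) := by
  have hmain := Sb_main a b r r
  have hL : (a + b) ^ (2 * (r + 1)) = (a + b) * ((a + b) ^ (r + r + 1)) := by
    rw [← pow_succ']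
    congr 1
    omega
  rw [hL, ← hmain]
  unfold Sb
  rw [mul_add, Finset.mul_sum, Finset.mul_sum, ← Finset.sum_add_distrib]
  refine Finset.sum_nbij' (fun k => r + 1 - k) (fun n => r + 1 - n) ?_ ?_ ?_ ?_ ?_
  · intro k hk
    simp only [Finset.mem_range] at hk
    simp only [Finset.mem_Icc]
    omega
  · intro n hn
    simp only [Finset.mem_Icc] at hn
    simp only [Finset.mem_range]
    omega
  · intro k hk
    simp only [Finset.mem_range] at hk
    show r + 1 - (r + 1 - k) = k
    omega
  · intro n hn
    simp only [Finset.mem_Icc] at hn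
    show r + 1 - (r + 1 - n) = n
    omega
  · intro k hk
    simp only [Finset.mem_range] at hk
    have hk' : k ≤ r := by omega
    have e1 : 2 * (r + 1) - (r + 1 - k) - 1 = r + k := by omega
    have e2 : r + 1 - (r + 1 - k) = k := by omega
    have e3 : r + 1 - 1 - k = r - k := by omega
    have e4 : (r + k).choose k = (r + k).choose r := by
      rw [← Nat.choose_symm (by omega : k ≤ r + k), show r + k - k = r from by omega]
    have e5 : (b + a) ^ (r - k) = (a + b) ^ (r - k) := by rw [add_comm]
    have e6 : (a + b) ^ (r + 1 - k) = (a + b) ^ (r - k) * (a + b) := by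
      rw [← pow_succ]
      congr 1
      omega
    rw [e1, e2, e3, e4, e5, e6]
    ring

lemma final_aux (a b : ℂ) (ha : a ≠ 0) (hb : b ≠ 0) (hs : a + b ≠ 0) (r : ℕ) :
    ((a * b) ^ (r + 1))⁻¹ =
      ∑ n ∈ Finset.Icc 1 (r + 1),
        ((2 * (r + 1) - n - 1).choose r : ℂ) * ((a + b) ^ n / (a + b) ^ (2 * (r + 1))) *
          ((a ^ n)⁻¹ + (b ^ n)⁻¹) := by
  have hterm : ∀ n ∈ Finset.Icc 1 (r + 1),
      ((2 * (r + 1) - n - 1).choose r : ℂ) * ((a + b) ^ n / (a + b) ^ (2 * (r + 1))) *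
          ((a ^ n)⁻¹ + (b ^ n)⁻¹)
        = ((2 * (r + 1) - n - 1).choose r : ℂ) * (a + b) ^ n *
            (a ^ (r + 1 - n) * b ^ (r + 1) + a ^ (r + 1) * b ^ (r + 1 - n))
          / ((a + b) ^ (2 * (r + 1)) * (a * b) ^ (r + 1)) := by
    intro n hn
    simp only [Finset.mem_Icc] at hn
    rw [pow_sub₀ _ ha hn.2, pow_sub₀ _ hb hn.2]
    field_simp
    ring
  rw [Finset.sum_congr rfl hterm, ← Finset.sum_div, ← key, ← div_div,
    div_self (pow_ne_zero _ hs), one_div]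

/-- The inverse triangular family: `(τ² + v)^{-m}` expressed as a finite linear
combination of the symmetrized powers `(x-ρ)^{-n} + (x-1+ρ)^{-n}`, where
`ρ = 1/2 + iτ` and `v = (x - 1/2)²`, with coefficients
`C(2m-n-1, m-1) (2x-1)^{n-2m}`. -/
theorem stmt1 (m : ℕ) (hm : 1 ≤ m) (x τ : ℂ) (hx : x ≠ 1 / 2)
    (ρ : ℂ) (hρ : ρ = 1 / 2 + Complex.I * τ)
    (v : ℂ) (hv : v = (x - 1 / 2) ^ 2)
    (h1 : x ≠ ρ) (h2 : x ≠ 1 - ρ) :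
    ((τ ^ 2 + v) ^ m)⁻¹ =
      ∑ n ∈ Finset.Icc 1 m,
        ((2 * m - n - 1).choose (m - 1) : ℂ) * (2 * x - 1) ^ ((n : ℤ) - 2 * m) *
          (((x - ρ) ^ n)⁻¹ + ((x - 1 + ρ) ^ n)⁻¹) := by
  obtain ⟨r, rfl⟩ : ∃ r, m = r + 1 := ⟨m - 1, by omega⟩
  have ha : x - ρ ≠ 0 := sub_ne_zero.mpr h1
  have hb : x - 1 + ρ ≠ 0 := by
    intro h
    apply h2
    linear_combination h
  have hs : 2 * x - 1 ≠ 0 := by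
    intro h
    apply hx
    linear_combination h / 2
  have hsum : (2 : ℂ) * x - 1 = (x - ρ) + (x - 1 + ρ) := by ring
  have hab : τ ^ 2 + v = (x - ρ) * (x - 1 + ρ) := by
    rw [hρ, hv]
    linear_combination τ ^ 2 * Complex.I_sq
  have hs' : (x - ρ) + (x - 1 + ρ) ≠ 0 := by rw [← hsum]; exact hs
  rw [hab, final_aux (x - ρ) (x - 1 + ρ) ha hb hs' r]
  refine Finset.sum_congr rfl fun n hn => ?_
  simp only [Finset.mem_Icc] at hn
  rw [← hsum]
  have hz : (2 * x - 1) ^ ((n : ℤ) - 2 * ((r + 1) : ℕ))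
      = (2 * x - 1) ^ n / (2 * x - 1) ^ (2 * (r + 1)) := by
    rw [show ((n : ℤ) - 2 * ((r + 1) : ℕ)) = (n : ℤ) - ((2 * (r + 1) : ℕ) : ℤ) from by
      push_cast; ring, zpow_sub₀ hs, zpow_natCast, zpow_natCast]
  rw [hz]
  norm_num
end

section
/- Let χ be an odd real primitive Dirichlet character of modulus d. Then (L_χ'/L_χ)(1) = γ + log(2π/d) − (L_χ'/L_χ)(0), where both logarithmic derivatives are well defined since L_χ(1) ≠ 0 and L_χ(0) ≠ 0. -/
/-!
Write `L_χ(s) = Λ(s) / Γℝ(s + 1)` with `Λ` the completed L-function. As `χ` is real, `χ⁻¹ = χ` and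
the functional equation reads `Λ(1 - s) = d^(s - 1/2) W Λ(s)`; its logarithmic derivative at
`s = 0` gives `(Λ'/Λ)(1) + (Λ'/Λ)(0) = -log d`. The Gamma factors contribute
`(Γℝ'/Γℝ)(1) + (Γℝ'/Γℝ)(2) = (Γℂ'/Γℂ)(1) = -(γ + log 2π)`, by `Γℝ(s) Γℝ(s + 1) = Γℂ(s)`.
Non-vanishing at `0` comes from `L_χ(1) ≠ 0` through the same functional equation.
-/

open Complex

lemma MulChar.inv_eq_self_of_forall_im_eq_zero {R : Type*} [CommRing R] [Finite Rˣ]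
    (χ : MulChar R ℂ) (h : ∀ a, (χ a).im = 0) : χ⁻¹ = χ := by
  rw [← MulChar.star_eq_inv]
  ext a
  simp [conj_eq_iff_im, h]

lemma logDeriv_comp_add_const {𝕜 : Type*} [NontriviallyNormedField 𝕜] (f : 𝕜 → 𝕜) (a x : 𝕜) :
    logDeriv (fun s ↦ f (s + a)) x = logDeriv f (x + a) := by
  rw [logDeriv_apply, logDeriv_apply, deriv_comp_add_const]

namespace Complex

lemma differentiableAt_Gammaℝ_of_ne_zero {s : ℂ} (hs : Gammaℝ s ≠ 0) :
    DifferentiableAt ℂ Gammaℝ s := by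
  simpa [Pi.inv_def] using (differentiable_Gammaℝ_inv s).inv (inv_ne_zero hs)

lemma logDeriv_Gammaℝ_one_add_logDeriv_Gammaℝ_two :
    logDeriv Gammaℝ 1 + logDeriv Gammaℝ 2 =
      -(Real.eulerMascheroniConstant + log (2 * Real.pi)) := by
  have hΓ₁ : Gammaℝ 1 ≠ 0 := Gammaℝ_ne_zero_of_re_pos (by simp)
  have hΓ₂ : Gammaℝ (1 + 1) ≠ 0 := Gammaℝ_ne_zero_of_re_pos (by norm_num)
  have hmul := logDeriv_mul (g := fun s ↦ Gammaℝ (s + 1)) 1 hΓ₁ hΓ₂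
    (differentiableAt_Gammaℝ_of_ne_zero hΓ₁)
    (differentiableAt_comp_add_const.mpr (differentiableAt_Gammaℝ_of_ne_zero hΓ₂))
  simp only [Gammaℝ_mul_Gammaℝ_add_one, logDeriv_comp_add_const, one_add_one_eq_two] at hmul
  rw [← hmul, logDeriv_apply, hasDerivAt_Gammaℂ_one.deriv, Gammaℂ_one]
  field_simp [ofReal_ne_zero.mpr Real.pi_ne_zero]

end Complex

namespace DirichletCharacter

variable {N : ℕ} [NeZero N] {χ : DirichletCharacter ℂ N}

omit [NeZero N] in
lemma Odd.ne_one (hχ : χ.Odd) : χ ≠ 1 := by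
  rintro rfl
  have h : (-1 : ℂ) = 1 := hχ.symm.trans (MulChar.one_apply isUnit_one.neg)
  norm_num at h

lemma Odd.LFunction_eq (hχ : χ.Odd) :
    LFunction χ = fun s ↦ completedLFunction χ s / Gammaℝ (s + 1) :=
  funext <| ZMod.LFunction_eq_completed_div_gammaFactor_odd hχ.to_fun

lemma Odd.logDeriv_LFunction (hχ : χ.Odd) {s : ℂ} (hs : completedLFunction χ s ≠ 0)
    (hΓ : Gammaℝ (s + 1) ≠ 0) :
    logDeriv (LFunction χ) s = logDeriv (completedLFunction χ) s - logDeriv Gammaℝ (s + 1) := by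
  rw [hχ.LFunction_eq, logDeriv_div s hs hΓ (differentiable_completedLFunction hχ.ne_one s)
    (differentiableAt_comp_add_const.mpr (differentiableAt_Gammaℝ_of_ne_zero hΓ)),
    logDeriv_comp_add_const]

namespace IsPrimitive

variable (hχ : χ.IsPrimitive) (hinv : χ⁻¹ = χ)
include hχ hinv

lemma completedLFunction_one_sub_of_inv_eq_self (s : ℂ) :
    completedLFunction χ (1 - s) = N ^ (s - 1 / 2) * rootNumber χ * completedLFunction χ s := by
  rw [hχ.completedLFunction_one_sub, hinv]

lemma completedLFunction_ne_zero_of_one_sub {s : ℂ} (hs : completedLFunction χ (1 - s) ≠ 0) :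
    completedLFunction χ s ≠ 0 := by
  rw [hχ.completedLFunction_one_sub_of_inv_eq_self hinv] at hs
  exact right_ne_zero_of_mul hs

lemma logDeriv_completedLFunction_one_sub_add (hone : χ ≠ 1) {s : ℂ}
    (hs : completedLFunction χ (1 - s) ≠ 0) :
    logDeriv (completedLFunction χ) (1 - s) + logDeriv (completedLFunction χ) s = -log N := by
  have hFE := hχ.completedLFunction_one_sub_of_inv_eq_self hinv
  have hΛ := differentiable_completedLFunction hone
  have hpow : HasDerivAt (fun s : ℂ ↦ (N : ℂ) ^ (s - 1 / 2)) ((N : ℂ) ^ (s - 1 / 2) * log N) s := by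
    simpa only [id, mul_one] using
      ((hasDerivAt_id s).sub_const (1 / 2)).const_cpow (Or.inl (NeZero.ne (N : ℂ)))
  have hderiv : -deriv (completedLFunction χ) (1 - s) = (N : ℂ) ^ (s - 1 / 2) * rootNumber χ *
      (log N * completedLFunction χ s + deriv (completedLFunction χ) s) := by
    rw [← deriv_comp_const_sub, funext hFE, ((hpow.mul_const _).fun_mul (hΛ s).hasDerivAt).deriv]
    ring
  have hΛs := hχ.completedLFunction_ne_zero_of_one_sub hinv hs
  rw [hFE] at hs
  rw [logDeriv_apply, logDeriv_apply, ← neg_neg (deriv _ (1 - s)), hderiv, hFE]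
  generalize (N : ℂ) ^ (s - 1 / 2) * rootNumber χ = a at hs ⊢
  field_simp [left_ne_zero_of_mul hs]
  ring

end IsPrimitive

end DirichletCharacter

open Real

/-- For an odd real primitive Dirichlet character `χ` of modulus `d`:
`L_χ(1) ≠ 0`, `L_χ(0) ≠ 0`, and
`(L_χ'/L_χ)(1) = γ + log(2π/d) - (L_χ'/L_χ)(0)`,
where `γ` is Euler's constant. -/
theorem stmt7 (d : ℕ) [NeZero d] (χ : DirichletCharacter ℂ d)
    (hreal : ∀ n : ZMod d, (χ n).im = 0) (hprim : χ.IsPrimitive)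
    (hodd : χ.Odd) :
    χ.LFunction 1 ≠ 0 ∧ χ.LFunction 0 ≠ 0 ∧
    deriv χ.LFunction 1 / χ.LFunction 1 =
      (Real.eulerMascheroniConstant : ℂ) + (Real.log (2 * Real.pi / d) : ℂ) -
        deriv χ.LFunction 0 / χ.LFunction 0 := by
  have hinv := χ.inv_eq_self_of_forall_im_eq_zero hreal
  have hΓ₁ : Gammaℝ (0 + 1) ≠ 0 := Gammaℝ_ne_zero_of_re_pos (by simp)
  have hΓ₂ : Gammaℝ (1 + 1) ≠ 0 := Gammaℝ_ne_zero_of_re_pos (by norm_num)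
  have hL₁ := DirichletCharacter.LFunction_apply_one_ne_zero hodd.ne_one
  have hΛ₁ : χ.completedLFunction 1 ≠ 0 := fun h ↦ hL₁ (by simp [hodd.LFunction_eq, h])
  have hΛ₁' : χ.completedLFunction (1 - 0) ≠ 0 := by rwa [sub_zero]
  have hΛ₀ := hprim.completedLFunction_ne_zero_of_one_sub hinv hΛ₁'
  have hFE := hprim.logDeriv_completedLFunction_one_sub_add hinv hodd.ne_one hΛ₁'
  rw [sub_zero] at hFE
  refine ⟨hL₁, by simpa [hodd.LFunction_eq] using div_ne_zero hΛ₀ hΓ₁, ?_⟩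
  have hlog : (Real.log (2 * π / d) : ℂ) = Complex.log (2 * π) - Complex.log d := by
    rw [Real.log_div (by positivity) (NeZero.ne _), ofReal_sub, ofReal_log (by positivity),
      ofReal_log (by positivity), ofReal_mul, ofReal_ofNat, ofReal_natCast]
  rw [← logDeriv_apply, ← logDeriv_apply, hodd.logDeriv_LFunction hΛ₁ hΓ₂,
    hodd.logDeriv_LFunction hΛ₀ hΓ₁, hlog, zero_add, one_add_one_eq_two]
  linear_combination hFE - logDeriv_Gammaℝ_one_add_logDeriv_Gammaℝ_two
end
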